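/- g₀(0) = 0, g₀ is nondecreasing on [0,∞), g₀(s) ≤ min(1, ℓ·s) for every s ≥ 0, and lim_{s→∞} g₀(s) = 1. -/

import Mathlib

open MeasureTheory Set Filter

/-- Hypotheses on the function `f₁` from Section 6.1 of the paper. -/
structure F1Hyp (ℓ ℓ₁ : ℝ) (f₁ : ℝ → ℝ) : Prop where
  hl : 0 < ℓ
  hl1 : 0 < ℓ₁
  cont : ContinuousOn f₁ (Icc 0 1)
  diff : ∃ d : ℝ → ℝ, ContinuousOn d (Ioc 0 1) ∧
    ∀ t ∈ Ioc (0:ℝ) 1, HasDerivWithinAt f₁ (d t) (Ioc 0 1) t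
  anti : StrictAntiOn f₁ (Icc 0 1)
  nonneg : ∀ t ∈ Icc (0:ℝ) 1, 0 ≤ f₁ t
  f10 : f₁ 0 = ℓ
  f11 : f₁ 1 = 0
  convexSqrt : ConvexOn ℝ (Icc 0 1) (fun u => f₁ (Real.sqrt u))
  lim0 : Tendsto (fun s => (f₁ s - ℓ + ℓ₁ * s) / s) (nhdsWithin 0 (Ioi 0)) (nhds 0)

/-- `γ` is admissible, with a.e. derivative `γ'` (absolute continuity is encoded by the
fundamental theorem of calculus representation with an `L¹` derivative). -/
def Admissible (γ γ' : ℝ → ℝ) : Prop :=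
  IntegrableOn γ' (Icc 0 1) ∧
  (∀ t ∈ Icc (0:ℝ) 1, γ t = ∫ u in (0:ℝ)..t, γ' u) ∧
  (∀ t ∈ Icc (0:ℝ) 1, 0 ≤ γ t ∧ γ t ≤ 1) ∧
  γ 0 = 0 ∧ γ 1 = 0

/-- The energy in the characterization (6.11). -/
noncomputable def energy (f₁ : ℝ → ℝ) (s : ℝ) (γ γ' : ℝ → ℝ) : ℝ :=
  ∫ t in (0:ℝ)..1, Real.sqrt (s ^ 2 * (f₁ (Real.sqrt (γ t))) ^ 2 + (γ' t) ^ 2 / 4)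

/-- The cohesive energy density of pristine material, via characterization (6.11). -/
noncomputable def g0 (f₁ : ℝ → ℝ) (s : ℝ) : ℝ :=
  sInf {x | ∃ γ γ' : ℝ → ℝ, Admissible γ γ' ∧ x = energy f₁ s γ γ'}

/-!
The constant curve `γ = 0` costs `ℓ s`. The bumps `γₙ(t) = 1 - (1 - 2t)^(2n+2)` cost at most
`1 + s ℓ / (2n + 3)`: convexity of `u ↦ f₁ √u` gives the chord bound `f₁ √u ≤ ℓ (1 - u)`, and the
gradient term of a curve rising monotonically to `1` and back is half its total variation, i.e. `1`.
Conversely, for `u < 1` an admissible `γ` either reaches height `u`, and then the gradient term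
alone is at least `u`, or stays below `u`, and then the bulk term is at least `s f₁ √u > 0`; hence
`g₀ s ≥ u` for large `s`.
-/

namespace Real

variable {s a b : ℝ}

lemma mul_le_sqrt_sq_mul_sq_add : s * a ≤ √(s ^ 2 * a ^ 2 + b ^ 2 / 4) :=
  le_sqrt_of_sq_le (by nlinarith [sq_nonneg b])

lemma abs_div_two_le_sqrt_sq_mul_sq_add : |b| / 2 ≤ √(s ^ 2 * a ^ 2 + b ^ 2 / 4) := by
  simpa [abs_div] using abs_le_sqrt (x := b / 2) (by nlinarith [sq_nonneg (s * a)])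

lemma sqrt_sq_mul_sq_add_le (hs : 0 ≤ s) (ha : 0 ≤ a) :
    √(s ^ 2 * a ^ 2 + b ^ 2 / 4) ≤ s * a + |b| / 2 :=
  sqrt_le_iff.2 ⟨by positivity, by nlinarith [sq_abs b, abs_nonneg b, mul_nonneg hs ha]⟩

lemma sqrt_sq_mul_sq_add_mono {s₁ s₂ : ℝ} (hs₁ : 0 ≤ s₁) (h : s₁ ≤ s₂) :
    √(s₁ ^ 2 * a ^ 2 + b ^ 2 / 4) ≤ √(s₂ ^ 2 * a ^ 2 + b ^ 2 / 4) := by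
  gcongr

lemma sqrt_mem_unitInterval {u : ℝ} (hu : u ∈ Icc (0:ℝ) 1) : √u ∈ Icc (0:ℝ) 1 :=
  ⟨sqrt_nonneg u, sqrt_le_one.2 hu.2⟩

end Real

namespace F1Hyp

variable {ℓ ℓ₁ : ℝ} {f₁ : ℝ → ℝ}

lemma comp_sqrt_nonneg (hf : F1Hyp ℓ ℓ₁ f₁) {u : ℝ} (hu : u ∈ Icc (0:ℝ) 1) :
    0 ≤ f₁ √u :=
  hf.nonneg _ (Real.sqrt_mem_unitInterval hu)

lemma comp_sqrt_le (hf : F1Hyp ℓ ℓ₁ f₁) {u : ℝ} (hu : u ∈ Icc (0:ℝ) 1) :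
    f₁ √u ≤ ℓ * (1 - u) := by
  have h := hf.convexSqrt.2 (left_mem_Icc.2 zero_le_one) (right_mem_Icc.2 zero_le_one)
    (sub_nonneg.2 hu.2) hu.1 (sub_add_cancel 1 u)
  simpa [hf.f10, hf.f11, mul_comm] using h

lemma comp_sqrt_le_ell (hf : F1Hyp ℓ ℓ₁ f₁) {u : ℝ} (hu : u ∈ Icc (0:ℝ) 1) :
    f₁ √u ≤ ℓ :=
  (hf.comp_sqrt_le hu).trans (mul_le_of_le_one_right hf.hl.le (by linarith [hu.1]))

lemma comp_sqrt_antitoneOn (hf : F1Hyp ℓ ℓ₁ f₁) :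
    AntitoneOn (fun u => f₁ √u) (Icc 0 1) := fun _ hu _ hv huv =>
  hf.anti.antitoneOn (Real.sqrt_mem_unitInterval hu) (Real.sqrt_mem_unitInterval hv)
    (Real.sqrt_le_sqrt huv)

lemma comp_sqrt_pos (hf : F1Hyp ℓ ℓ₁ f₁) {u : ℝ} (hu : u ∈ Ico (0:ℝ) 1) : 0 < f₁ √u := by
  have h := hf.anti (Real.sqrt_mem_unitInterval (Ico_subset_Icc_self hu))
    (right_mem_Icc.2 zero_le_one) (by simpa using Real.sqrt_lt_sqrt hu.1 hu.2)
  rwa [hf.f11] at h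

end F1Hyp

section

variable {ℓ ℓ₁ s : ℝ} {f₁ γ γ' : ℝ → ℝ}

lemma energy_nonneg : 0 ≤ energy f₁ s γ γ' :=
  intervalIntegral.integral_nonneg zero_le_one fun _ _ => Real.sqrt_nonneg _

namespace Admissible

lemma mem_Icc (h : Admissible γ γ') {t : ℝ} (ht : t ∈ Icc (0:ℝ) 1) : γ t ∈ Icc (0:ℝ) 1 :=
  h.2.2.1 t ht

lemma intervalIntegrable_deriv (h : Admissible γ γ') {a b : ℝ} (ha : 0 ≤ a) (hab : a ≤ b)
    (hb : b ≤ 1) : IntervalIntegrable γ' volume a b :=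
  (intervalIntegrable_iff_integrableOn_Icc_of_le hab).2 (h.1.mono_set (Icc_subset_Icc ha hb))

lemma continuousOn (h : Admissible γ γ') : ContinuousOn γ (Icc 0 1) := by
  have hprim := intervalIntegral.continuousOn_primitive_interval (a := 0) (b := 1) (μ := volume)
    (f := γ') (by rw [uIcc_of_le zero_le_one]; exact h.1)
  rw [uIcc_of_le zero_le_one] at hprim
  exact hprim.congr h.2.1

lemma two_mul_le_integral_abs_deriv (h : Admissible γ γ') {t : ℝ} (ht : t ∈ Icc (0:ℝ) 1) :
    2 * γ t ≤ ∫ u in (0:ℝ)..1, |γ' u| := by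
  have hi₁ := h.intervalIntegrable_deriv le_rfl ht.1 ht.2
  have hi₂ := h.intervalIntegrable_deriv ht.1 ht.2 le_rfl
  have hγt : γ t = ∫ u in (0:ℝ)..t, γ' u := h.2.1 t ht
  have hγ1 : (∫ u in (0:ℝ)..t, γ' u) + ∫ u in t..1, γ' u = 0 := by
    rw [intervalIntegral.integral_add_adjacent_intervals hi₁ hi₂, ← h.2.1 1 (by simp),
      h.2.2.2.2]
  have hup : (∫ u in (0:ℝ)..t, γ' u) ≤ ∫ u in (0:ℝ)..t, |γ' u| :=
    intervalIntegral.integral_mono_on ht.1 hi₁ hi₁.abs fun u _ => le_abs_self _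
  have hdown : (∫ u in t..1, -γ' u) ≤ ∫ u in t..1, |γ' u| :=
    intervalIntegral.integral_mono_on ht.2 hi₂.neg hi₂.abs fun u _ => neg_le_abs _
  rw [intervalIntegral.integral_neg] at hdown
  rw [← intervalIntegral.integral_add_adjacent_intervals hi₁.abs hi₂.abs]
  linarith

lemma continuousOn_comp_sqrt (hf : F1Hyp ℓ ℓ₁ f₁) (h : Admissible γ γ') :
    ContinuousOn (fun t => f₁ √(γ t)) (Icc 0 1) :=
  hf.cont.comp (Real.continuous_sqrt.comp_continuousOn h.continuousOn)
    fun _ ht => Real.sqrt_mem_unitInterval (h.mem_Icc ht)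

lemma intervalIntegrable_energy (hf : F1Hyp ℓ ℓ₁ f₁) (h : Admissible γ γ') (s : ℝ) :
    IntervalIntegrable (fun t => √(s ^ 2 * f₁ √(γ t) ^ 2 + γ' t ^ 2 / 4)) volume 0 1 := by
  rw [intervalIntegrable_iff_integrableOn_Icc_of_le zero_le_one]
  have hF := (h.continuousOn_comp_sqrt hf).aestronglyMeasurable (μ := volume) measurableSet_Icc
  have hmeas : AEStronglyMeasurable (fun t => √(s ^ 2 * f₁ √(γ t) ^ 2 + γ' t ^ 2 / 4))
      (volume.restrict (Icc 0 1)) :=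
    (Real.continuous_sqrt.measurable.comp_aemeasurable
      ((aemeasurable_const.mul (hF.aemeasurable.pow_const 2)).add
        ((h.1.aemeasurable.pow_const 2).div_const 4))).aestronglyMeasurable
  refine Integrable.mono' ((integrable_const (|s| * ℓ)).add (h.1.abs.div_const 2)) hmeas ?_
  filter_upwards [ae_restrict_mem measurableSet_Icc] with t ht
  have hγt := h.mem_Icc ht
  rw [Real.norm_of_nonneg (Real.sqrt_nonneg _), ← sq_abs s]
  calc _ ≤ |s| * f₁ √(γ t) + |γ' t| / 2 :=
        Real.sqrt_sq_mul_sq_add_le (abs_nonneg s) (hf.comp_sqrt_nonneg hγt)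
    _ ≤ |s| * ℓ + |γ' t| / 2 := by gcongr; exact hf.comp_sqrt_le_ell hγt

lemma le_energy (hf : F1Hyp ℓ ℓ₁ f₁) (h : Admissible γ γ') {t : ℝ} (ht : t ∈ Icc (0:ℝ) 1) :
    γ t ≤ energy f₁ s γ γ' := by
  have hi := (h.intervalIntegrable_deriv le_rfl zero_le_one le_rfl).abs
  calc γ t ≤ (∫ u in (0:ℝ)..1, |γ' u|) / 2 := by linarith [h.two_mul_le_integral_abs_deriv ht]
    _ = ∫ u in (0:ℝ)..1, |γ' u| / 2 := (intervalIntegral.integral_div _ _).symm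
    _ ≤ energy f₁ s γ γ' :=
      intervalIntegral.integral_mono_on zero_le_one (hi.div_const 2)
        (h.intervalIntegrable_energy hf s) fun _ _ => Real.abs_div_two_le_sqrt_sq_mul_sq_add

lemma mul_le_energy (hf : F1Hyp ℓ ℓ₁ f₁) (h : Admissible γ γ') (hs : 0 ≤ s) {c : ℝ}
    (hc : ∀ t ∈ Icc (0:ℝ) 1, c ≤ f₁ √(γ t)) : s * c ≤ energy f₁ s γ γ' :=
  calc s * c = ∫ _ in (0:ℝ)..1, s * c := by simp
    _ ≤ energy f₁ s γ γ' :=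
      intervalIntegral.integral_mono_on zero_le_one intervalIntegrable_const
        (h.intervalIntegrable_energy hf s) fun t ht =>
          (mul_le_mul_of_nonneg_left (hc t ht) hs).trans Real.mul_le_sqrt_sq_mul_sq_add

lemma energy_le (hf : F1Hyp ℓ ℓ₁ f₁) (h : Admissible γ γ') (hs : 0 ≤ s) :
    energy f₁ s γ γ' ≤
      s * ℓ * (∫ t in (0:ℝ)..1, (1 - γ t)) + (∫ t in (0:ℝ)..1, |γ' t|) / 2 := by
  have hi₁ : IntervalIntegrable (fun t => 1 - γ t) volume 0 1 :=
    (continuousOn_const.sub h.continuousOn).intervalIntegrable_of_Icc zero_le_one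
  have hi₂ := (h.intervalIntegrable_deriv le_rfl zero_le_one le_rfl).abs.div_const 2
  calc energy f₁ s γ γ' ≤ ∫ t in (0:ℝ)..1, (s * ℓ * (1 - γ t) + |γ' t| / 2) := by
        refine intervalIntegral.integral_mono_on zero_le_one (h.intervalIntegrable_energy hf s)
          ((hi₁.const_mul _).add hi₂) fun t ht => ?_
        have hγt := h.mem_Icc ht
        calc _ ≤ s * f₁ √(γ t) + |γ' t| / 2 :=
              Real.sqrt_sq_mul_sq_add_le hs (hf.comp_sqrt_nonneg hγt)
          _ ≤ s * ℓ * (1 - γ t) + |γ' t| / 2 := by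
              rw [mul_assoc]; gcongr; exact hf.comp_sqrt_le hγt
    _ = _ := by
      rw [intervalIntegral.integral_add (hi₁.const_mul _) hi₂,
        intervalIntegral.integral_const_mul, intervalIntegral.integral_div]

end Admissible

lemma g0_le_energy (h : Admissible γ γ') : g0 f₁ s ≤ energy f₁ s γ γ' :=
  csInf_le ⟨0, by rintro _ ⟨_, _, _, rfl⟩; exact energy_nonneg⟩ ⟨γ, γ', h, rfl⟩

lemma admissible_zero : Admissible 0 0 :=
  ⟨integrableOn_zero, fun _ _ => by simp, fun _ _ => by simp, rfl, rfl⟩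

lemma le_g0 {c : ℝ} (h : ∀ γ γ', Admissible γ γ' → c ≤ energy f₁ s γ γ') : c ≤ g0 f₁ s :=
  le_csInf ⟨_, 0, 0, admissible_zero, rfl⟩ fun _ ⟨γ, γ', hγ, hx⟩ => hx ▸ h γ γ' hγ

lemma energy_zero (hf : F1Hyp ℓ ℓ₁ f₁) (hs : 0 ≤ s) : energy f₁ s 0 0 = ℓ * s := by
  simp [energy, hf.f10, ← mul_pow, mul_comm, Real.sqrt_sq (mul_nonneg hf.hl.le hs)]

lemma g0_nonneg : 0 ≤ g0 f₁ s :=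
  le_g0 fun _ _ _ => energy_nonneg

lemma g0_le_mul (hf : F1Hyp ℓ ℓ₁ f₁) (hs : 0 ≤ s) : g0 f₁ s ≤ ℓ * s :=
  (g0_le_energy admissible_zero).trans_eq (energy_zero hf hs)

lemma g0_zero (hf : F1Hyp ℓ ℓ₁ f₁) : g0 f₁ 0 = 0 :=
  le_antisymm (by simpa using g0_le_mul hf le_rfl) g0_nonneg

lemma g0_monotoneOn (hf : F1Hyp ℓ ℓ₁ f₁) : MonotoneOn (g0 f₁) (Ici 0) :=
  fun s₁ hs₁ _ _ h₁₂ => le_g0 fun _ _ hγ => (g0_le_energy hγ).trans <|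
    intervalIntegral.integral_mono_on zero_le_one (hγ.intervalIntegrable_energy hf s₁)
      (hγ.intervalIntegrable_energy hf _) fun _ _ => Real.sqrt_sq_mul_sq_add_mono hs₁ h₁₂

noncomputable def bumpProfile (n : ℕ) (t : ℝ) : ℝ := 1 - (1 - 2 * t) ^ (2 * n + 2)

noncomputable def bumpProfileDeriv (n : ℕ) (t : ℝ) : ℝ := (4 * n + 4) * (1 - 2 * t) ^ (2 * n + 1)

namespace bumpProfile

variable (n : ℕ)

lemma hasDerivAt (t : ℝ) : HasDerivAt (bumpProfile n) (bumpProfileDeriv n t) t := by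
  refine ((((hasDerivAt_id' t).const_mul (2:ℝ)).const_sub 1).pow (2 * n + 2)).const_sub 1
    |>.congr_deriv ?_
  rw [bumpProfileDeriv, show 2 * n + 2 - 1 = 2 * n + 1 by omega]
  push_cast
  ring

lemma continuous_deriv : Continuous (bumpProfileDeriv n) := by
  unfold bumpProfileDeriv; fun_prop

lemma integral_deriv (a b : ℝ) :
    ∫ t in a..b, bumpProfileDeriv n t = bumpProfile n b - bumpProfile n a :=
  intervalIntegral.integral_eq_sub_of_hasDerivAt (fun t _ => hasDerivAt n t)
    ((continuous_deriv n).intervalIntegrable a b)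

lemma apply_zero : bumpProfile n 0 = 0 := by simp [bumpProfile]

lemma apply_half : bumpProfile n (1 / 2) = 1 := by norm_num [bumpProfile]

lemma apply_one : bumpProfile n 1 = 0 := by
  norm_num [bumpProfile, Even.neg_one_pow (⟨n + 1, by ring⟩ : Even (2 * n + 2))]

lemma admissible : Admissible (bumpProfile n) (bumpProfileDeriv n) := by
  refine ⟨(continuous_deriv n).integrableOn_Icc, fun t _ => ?_, fun t ht => ?_,
    apply_zero n, apply_one n⟩
  · rw [integral_deriv, apply_zero, sub_zero]
  · have hsq : (1 - 2 * t) ^ 2 ≤ 1 := by nlinarith [ht.1, ht.2]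
    have hpow := pow_le_one₀ (sq_nonneg _) hsq (n := n + 1)
    have hpos := pow_nonneg (sq_nonneg (1 - 2 * t)) (n + 1)
    rw [bumpProfile, show 2 * n + 2 = 2 * (n + 1) by ring, pow_mul]
    constructor <;> linarith

lemma integral_abs_deriv : ∫ t in (0:ℝ)..1, |bumpProfileDeriv n t| = 2 := by
  have hi := (continuous_deriv n).abs.intervalIntegrable (μ := volume)
  have hup : ∫ t in (0:ℝ)..1 / 2, |bumpProfileDeriv n t| = 1 := by
    rw [intervalIntegral.integral_congr fun t ht => abs_of_nonneg (?_ : 0 ≤ bumpProfileDeriv n t),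
      integral_deriv, apply_half, apply_zero, sub_zero]
    rw [uIcc_of_le (by norm_num)] at ht
    exact mul_nonneg (by positivity) (pow_nonneg (by linarith [ht.2]) _)
  have hdown : ∫ t in (1 / 2 : ℝ)..1, |bumpProfileDeriv n t| = 1 := by
    rw [intervalIntegral.integral_congr fun t ht => abs_of_nonpos (?_ : bumpProfileDeriv n t ≤ 0),
      intervalIntegral.integral_neg, integral_deriv, apply_half, apply_one, zero_sub, neg_neg]
    rw [uIcc_of_le (by norm_num)] at ht
    exact mul_nonpos_of_nonneg_of_nonpos (by positivity)
      (Odd.pow_nonpos ⟨n, rfl⟩ (by linarith [ht.1]))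
  rw [← intervalIntegral.integral_add_adjacent_intervals (hi 0 (1 / 2)) (hi (1 / 2) 1), hup, hdown]
  norm_num

lemma integral_one_sub : ∫ t in (0:ℝ)..1, (1 - bumpProfile n t) = 1 / (2 * n + 3) := by
  simp only [bumpProfile, sub_sub_cancel]
  rw [intervalIntegral.integral_comp_sub_mul (fun x => x ^ (2 * n + 2)) two_ne_zero, integral_pow]
  norm_num [Odd.neg_one_pow (⟨n + 1, by ring⟩ : Odd (2 * n + 2 + 1))]
  field_simp
  ring

end bumpProfile

lemma g0_le_one (hf : F1Hyp ℓ ℓ₁ f₁) (hs : 0 ≤ s) : g0 f₁ s ≤ 1 := by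
  have hbound : ∀ n : ℕ, g0 f₁ s ≤ s * ℓ * (1 / (2 * n + 3)) + 1 := fun n => by
    have h := (bumpProfile.admissible n).energy_le hf hs
    rw [bumpProfile.integral_one_sub, bumpProfile.integral_abs_deriv] at h
    linarith [g0_le_energy (f₁ := f₁) (s := s) (bumpProfile.admissible n)]
  have hden : Tendsto (fun n : ℕ => (2 * n + 3 : ℝ)) atTop atTop :=
    tendsto_atTop_add_const_right _ 3
      (tendsto_natCast_atTop_atTop.const_mul_atTop two_pos)
  have hlim : Tendsto (fun n : ℕ => s * ℓ * (1 / (2 * n + 3)) + 1) atTop (nhds 1) := by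
    simpa using (hden.inv_tendsto_atTop.const_mul (s * ℓ)).add_const 1
  exact ge_of_tendsto' hlim hbound

lemma min_le_g0 (hf : F1Hyp ℓ ℓ₁ f₁) (hs : 0 ≤ s) {u : ℝ} (hu : u ∈ Icc (0:ℝ) 1) :
    min u (s * f₁ √u) ≤ g0 f₁ s :=
  le_g0 fun γ γ' hγ => by
    by_cases h : ∃ t ∈ Icc (0:ℝ) 1, u ≤ γ t
    · obtain ⟨t, ht, hut⟩ := h
      exact (min_le_left _ _).trans (hut.trans (hγ.le_energy hf ht))
    · simp only [not_exists, not_and, not_le] at h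
      exact (min_le_right _ _).trans <| hγ.mul_le_energy hf hs fun t ht =>
        hf.comp_sqrt_antitoneOn (hγ.mem_Icc ht) hu (h t ht).le

lemma tendsto_g0_atTop (hf : F1Hyp ℓ ℓ₁ f₁) : Tendsto (g0 f₁) atTop (nhds 1) := by
  refine tendsto_order.2 ⟨fun a ha => ?_, fun a ha => ?_⟩
  · set u := max 0 ((a + 1) / 2)
    have hu : u ∈ Ico (0:ℝ) 1 := ⟨le_max_left _ _, max_lt one_pos (by linarith)⟩
    have hau : a < u := lt_max_of_lt_right (by linarith)
    have hc := hf.comp_sqrt_pos hu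
    filter_upwards [eventually_ge_atTop (u / f₁ √u), eventually_ge_atTop 0] with s hsu hs
    calc a < u := hau
      _ = min u (s * f₁ √u) := (min_eq_left ((div_le_iff₀ hc).1 hsu)).symm
      _ ≤ g0 f₁ s := min_le_g0 hf hs (Ico_subset_Icc_self hu)
  · filter_upwards [eventually_ge_atTop 0] with s hs
    exact (g0_le_one hf hs).trans_lt ha

end

theorem stmt_0 (ℓ ℓ₁ : ℝ) (f₁ : ℝ → ℝ) (hf : F1Hyp ℓ ℓ₁ f₁) :
    g0 f₁ 0 = 0 ∧ MonotoneOn (g0 f₁) (Ici 0) ∧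
    (∀ s : ℝ, 0 ≤ s → g0 f₁ s ≤ min 1 (ℓ * s)) ∧
    Tendsto (g0 f₁) atTop (nhds 1) :=
  ⟨g0_zero hf, g0_monotoneOn hf, fun _ hs => le_min (g0_le_one hf hs) (g0_le_mul hf hs),
    tendsto_g0_atTop hf⟩
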